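/- If s ↦ L(s) satisfies H1–H4, then there exists a constant C^P, depending only on c^P, such that for any T ≥ 1 and k ≤ T, ‖L_{k,T} L_{k−1,T}⋯L_{1,T} − L^P_{k,T} L^P_{k−1,T}⋯L^P_{1,T} P₀ − L^Q_{k,T} L^Q_{k−1,T}⋯L^Q_{1,T} Q₀‖ ≤ C^P/(T(1−ℓ)), where L^P_{k,T} = L_{k,T} P_{k,T} and L^Q_{k,T} = L_{k,T} Q_{k,T}. Moreover, ‖L^Q_{k,T} L^Q_{k−1,T}⋯L^Q_{1,T} Q₀‖ ≤ 2ℓ^k. -/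

import Mathlib

/-!
The error `E_k = L_k ⋯ L_1 - L^P_k ⋯ L^P_1 P₀ - L^Q_k ⋯ L^Q_1 Q₀` obeys a one-step recursion
in which every source term carries a factor `P_{k+1} - P_k = O(1/T)`. Its `Q_k`-component is
contracted by `ℓ` at each step, so it stays `O(1/(T(1-ℓ)))`. Its `P_k`-component grows at most
by `1 + O(1/T)` per step and is fed by the `Q_k`-component and by the contracting product, which
decays like `ℓ^k`; over `k ≤ T` steps a discrete Grönwall inequality keeps it `O(1/(T(1-ℓ)))`
too. The bound `2ℓ^k` on the contracting product follows from H4 and `‖P(s)‖ ≤ 1`; the latter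
holds because `L^n P = ∑_j e_j^n P^j` differs from `L^n` by `(L Q)^n = O(ℓ^n)`, while by
compactness of the torus some arbitrarily large `n` makes every `e_j^n` close to `1`.
-/

open Matrix Finset Set
open scoped Kronecker ComplexOrder ENNReal

namespace RISPaper

variable {nS nE N : Type*}

/-- Partial trace over the second (environment) factor. -/
noncomputable def ptraceE [Fintype nE] (A : Matrix (nS × nE) (nS × nE) ℂ) :
    Matrix nS nS ℂ := Matrix.of fun i j => ∑ k : nE, A (i, k) (j, k)

/-- Partial trace over the first (system) factor. -/
noncomputable def ptraceS [Fintype nS] (A : Matrix (nS × nE) (nS × nE) ℂ) :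
    Matrix nE nE ℂ := Matrix.of fun i j => ∑ k : nS, A (k, i) (k, j)

/-- Logarithm of a Hermitian matrix, via the spectral decomposition (junk value `0`
on non-Hermitian matrices; eigenvalue `0` contributes `Real.log 0 = 0`). -/
noncomputable def hlog [Fintype N] [DecidableEq N] (A : Matrix N N ℂ) : Matrix N N ℂ :=
  if hA : A.IsHermitian then
    (hA.eigenvectorUnitary : Matrix N N ℂ) *
      Matrix.diagonal (fun i => (Real.log (hA.eigenvalues i) : ℂ)) *
      (star (hA.eigenvectorUnitary : Matrix N N ℂ))
  else 0

/-- von Neumann entropy `S(η) = -Tr (η log η)`. -/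
noncomputable def vnEntropy [Fintype N] [DecidableEq N] (A : Matrix N N ℂ) : ℝ :=
  (-(A * hlog A).trace).re

/-- Relative entropy `S(η|ν) = Tr (η (log η - log ν))`. -/
noncomputable def relEntropy [Fintype N] [DecidableEq N] (A B : Matrix N N ℂ) : ℝ :=
  ((A * (hlog A - hlog B)).trace).re

/-- Gibbs state `exp(-βh)/Tr(exp(-βh))`. -/
noncomputable def gibbs [Fintype N] [DecidableEq N] (β : ℝ) (h : Matrix N N ℂ) : Matrix N N ℂ :=
  (NormedSpace.exp ((-β : ℂ) • h)).trace⁻¹ • NormedSpace.exp ((-β : ℂ) • h)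

/-- A state: positive semidefinite with unit trace. -/
def IsState [Fintype N] (ρ : Matrix N N ℂ) : Prop := ρ.PosSemidef ∧ ρ.trace = 1

/-- A faithful state: positive definite with unit trace. -/
def IsFaithfulState [Fintype N] (ρ : Matrix N N ℂ) : Prop := ρ.PosDef ∧ ρ.trace = 1

/-- Trace norm `‖A‖₁ = Tr √(AᴴA)`. -/
noncomputable def traceNorm [Fintype N] [DecidableEq N] (A : Matrix N N ℂ) : ℝ :=
  ((Matrix.posSemidef_conjTranspose_mul_self A).1.eigenvectorUnitary.1 *
    Matrix.diagonal (((↑) : ℝ → ℂ) ∘ (Real.sqrt ∘ (Matrix.posSemidef_conjTranspose_mul_self A).1.eigenvalues)) *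
    (star (Matrix.posSemidef_conjTranspose_mul_self A).1.eigenvectorUnitary : Matrix N N ℂ)).trace.re

/-- Operator (ℓ²→ℓ²) norm of a matrix. -/
noncomputable def opNorm [Fintype N] [DecidableEq N] (A : Matrix N N ℂ) : ℝ :=
  ‖LinearMap.toContinuousLinearMap (Matrix.toEuclideanLin A)‖

/-- Operator norm of a map on matrices, with respect to the trace norm. -/
noncomputable def mapTNorm [Fintype N] [DecidableEq N]
    (f : Matrix N N ℂ → Matrix N N ℂ) : ℝ :=
  sSup ((fun A => traceNorm (f A)) '' {A | traceNorm A ≤ 1})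

/-- The smallest point of the spectrum of a Hermitian matrix (junk value `0` otherwise). -/
noncomputable def infSpec [Fintype N] [DecidableEq N] [Nonempty N] (A : Matrix N N ℂ) : ℝ :=
  if hA : A.IsHermitian then ⨅ i, hA.eigenvalues i else 0

/-- Amplification `Φ ⊗ id_k` of a map on matrices. -/
noncomputable def amp [Fintype N] (Φ : Matrix N N ℂ → Matrix N N ℂ) (k : ℕ)
    (M : Matrix (N × Fin k) (N × Fin k) ℂ) : Matrix (N × Fin k) (N × Fin k) ℂ :=
  Matrix.of fun p q => Φ (Matrix.of fun i j => M (i, p.2) (j, q.2)) p.1 q.1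

/-- Complete positivity. -/
def IsCompletelyPositive [Fintype N] (Φ : Matrix N N ℂ → Matrix N N ℂ) : Prop :=
  ∀ (k : ℕ) (M : Matrix (N × Fin k) (N × Fin k) ℂ), M.PosSemidef → (amp Φ k M).PosSemidef

/-- Trace preservation. -/
def IsTracePreserving [Fintype N] (Φ : Matrix N N ℂ → Matrix N N ℂ) : Prop :=
  ∀ A, (Φ A).trace = A.trace

/-- CPTP (quantum channel). -/
def IsCPTP [Fintype N] (Φ : Matrix N N ℂ → Matrix N N ℂ) : Prop :=
  IsCompletelyPositive Φ ∧ IsTracePreserving Φ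

/-- Irreducibility of a map on matrices: the only invariant hereditary subalgebras are
trivial. -/
def IsIrreducible [Fintype N] [DecidableEq N] (Φ : Matrix N N ℂ → Matrix N N ℂ) : Prop :=
  ∀ p : Matrix N N ℂ, p.IsHermitian → p * p = p →
    (∀ A, Φ (p * A * p) = p * Φ (p * A * p) * p) → p = 0 ∨ p = 1

/-- The divided-difference kernel entering the Hessian of relative entropy. -/
noncomputable def ddKernel (x y : ℝ) : ℝ :=
  if x = y then 1 / (2 * x) else (Real.log x - Real.log y) / (2 * (x - y))

/-- The quadratic form `F_η(A,B)` of the paper (second-order expansion of relative entropy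
around the faithful state `η`), written via the eigendecomposition of `η`. -/
noncomputable def Fq [Fintype N] [DecidableEq N] (η A B : Matrix N N ℂ) : ℝ :=
  if hη : η.IsHermitian then
    (∑ a : N, ∑ b : N,
      (ddKernel (hη.eigenvalues a) (hη.eigenvalues b) : ℂ) *
        ((star (hη.eigenvectorUnitary : Matrix N N ℂ) * A *
            (hη.eigenvectorUnitary : Matrix N N ℂ)) b a *
         (star (hη.eigenvectorUnitary : Matrix N N ℂ) * B *
            (hη.eigenvectorUnitary : Matrix N N ℂ)) a b)).re
  else 0

/-- Ordered product `f k * f (k-1) * ⋯ * f 1` (equal to `1` for `k = 0`). -/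
noncomputable def opProd {α : Type*} [Monoid α] (f : ℕ → α) : ℕ → α
  | 0 => 1
  | k + 1 => f (k + 1) * opProd f k

/-- `P` is the spectral projection of `L` associated with the peripheral part of the
spectrum (eigenvalues of modulus one). -/
def IsPeripheralProj {X : Type*} [NormedAddCommGroup X] [NormedSpace ℂ X]
    (L P : X →L[ℂ] X) : Prop :=
  P * P = P ∧ L * P = P * L ∧
    (LinearMap.range (P : X →ₗ[ℂ] X) =
      ⨆ z ∈ {z : ℂ | ‖z‖ = 1}, Module.End.maxGenEigenspace (L : X →ₗ[ℂ] X) z) ∧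
    (LinearMap.ker (P : X →ₗ[ℂ] X) =
      ⨆ z ∈ {z : ℂ | ‖z‖ ≠ 1}, Module.End.maxGenEigenspace (L : X →ₗ[ℂ] X) z)

/-- `P` is the spectral projection of `L` associated with the eigenvalue `z`. -/
def IsSpectralProjAt {X : Type*} [NormedAddCommGroup X] [NormedSpace ℂ X]
    (L P : X →L[ℂ] X) (z : ℂ) : Prop :=
  P * P = P ∧ L * P = P * L ∧
    (LinearMap.range (P : X →ₗ[ℂ] X) =
      Module.End.maxGenEigenspace (L : X →ₗ[ℂ] X) z) ∧
    (LinearMap.ker (P : X →ₗ[ℂ] X) =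
      ⨆ w ∈ {w : ℂ | w ≠ z}, Module.End.maxGenEigenspace (L : X →ₗ[ℂ] X) w)

section OrderedProducts

variable {α : Type*} [Monoid α]

@[simp]
theorem opProd_zero (f : ℕ → α) : opProd f 0 = 1 := rfl

theorem opProd_succ (f : ℕ → α) (k : ℕ) : opProd f (k + 1) = f (k + 1) * opProd f k := rfl

theorem opProd_congr {f g : ℕ → α} {k : ℕ} (h : ∀ i, 1 ≤ i → i ≤ k → f i = g i) :
    opProd f k = opProd g k := by
  induction k with
  | zero => rfl
  | succ k ih =>
    rw [opProd_succ, opProd_succ, h (k + 1) (by omega) le_rfl,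
      ih fun i hi hik => h i hi (by omega)]

end OrderedProducts

section PeripheralProjection

theorem pow_mul_eq_pow_smul_of_mul_eq_smul {𝕜 R : Type*} [CommSemiring 𝕜] [Semiring R]
    [Algebra 𝕜 R] {a p : R} {c : 𝕜} (h : a * p = c • p) (n : ℕ) : a ^ n * p = c ^ n • p := by
  induction n with
  | zero => simp
  | succ n ih => rw [pow_succ, mul_assoc, h, mul_smul_comm, ih, smul_smul, ← pow_succ']

theorem sum_pow_smul_eq_pow_sub_pow {𝕜 R : Type*} [CommSemiring 𝕜] [Ring R] [Algebra 𝕜 R]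
    {J : Type*} [Fintype J] {L : R} {e : J → 𝕜} {P : J → R} (hcomm : Commute L (∑ j, P j))
    (hidem : IsIdempotentElem (∑ j, P j)) (heig : ∀ j, L * P j = e j • P j) {n : ℕ}
    (hn : n ≠ 0) : ∑ j, e j ^ n • P j = L ^ n - (L * (1 - ∑ j, P j)) ^ n := by
  rw [((Commute.one_right L).sub_right hcomm).mul_pow, hidem.one_sub.pow_eq hn, mul_sub,
    mul_one, sub_sub_cancel, Finset.mul_sum]
  exact Finset.sum_congr rfl fun j _ => (pow_mul_eq_pow_smul_of_mul_eq_smul (heig j) n).symm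

open Filter in
theorem frequently_forall_norm_pow_sub_one_lt {𝕜 : Type*} [NormedDivisionRing 𝕜]
    [ProperSpace 𝕜] {J : Type*} [Fintype J] {e : J → 𝕜} (he : ∀ j, ‖e j‖ = 1) {δ : ℝ}
    (hδ : 0 < δ) : ∃ᶠ n in atTop, ∀ j, ‖e j ^ n - 1‖ < δ := by
  have hmem (n : ℕ) : (fun j => e j ^ n) ∈ Metric.closedBall (0 : J → 𝕜) 1 := by
    simp [pi_norm_le_iff_of_nonneg, he]
  obtain ⟨x, -, φ, hφ, hlim⟩ := (isCompact_closedBall (0 : J → 𝕜) 1).tendsto_subseq hmem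
  obtain ⟨M, hM⟩ := Metric.tendsto_atTop.1 hlim (δ / 2) (half_pos hδ)
  refine frequently_atTop.2 fun N => ?_
  have hM' : M ≤ φ M + N := hφ.le_apply.trans (Nat.le_add_right _ _)
  obtain ⟨d, hd⟩ := Nat.exists_eq_add_of_le (hφ.monotone hM')
  have hclose : dist (fun j => e j ^ φ (φ M + N)) (fun j => e j ^ φ M) < δ := by
    have h₁ := hM _ hM'
    have h₂ := hM M le_rfl
    simp only [Function.comp_apply] at h₁ h₂
    linarith [dist_triangle_right (fun j => e j ^ φ (φ M + N)) (fun j => e j ^ φ M) x]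
  refine ⟨d, by linarith [hφ.le_apply (x := φ M + N)], fun j => ?_⟩
  calc ‖e j ^ d - 1‖ = ‖e j ^ φ M * (e j ^ d - 1)‖ := by
        rw [norm_mul, norm_pow, he, one_pow, one_mul]
    _ = ‖e j ^ φ (φ M + N) - e j ^ φ M‖ := by rw [hd, pow_add, mul_sub, mul_one]
    _ < δ := by simpa [dist_eq_norm] using (dist_le_pi_dist _ _ j).trans_lt hclose

open Filter in
theorem norm_sum_le_one_of_peripheral {R : Type*} [NormedRing R] [NormedAlgebra ℂ R]
    {J : Type*} [Fintype J] {L : R} {e : J → ℂ} {P : J → R} {ℓ : ℝ} (hL : ‖L‖ ≤ 1)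
    (he : ∀ j, ‖e j‖ = 1) (hcomm : Commute L (∑ j, P j)) (hidem : IsIdempotentElem (∑ j, P j))
    (heig : ∀ j, L * P j = e j • P j) (hℓ : ℓ < 1) (hQ : ‖L * (1 - ∑ j, P j)‖ ≤ ℓ) :
    ‖∑ j, P j‖ ≤ 1 := by
  refine le_of_forall_pos_le_add fun η hη => ?_
  set K := ∑ j, ‖P j‖
  have hK : 0 ≤ K := Finset.sum_nonneg fun j _ => norm_nonneg _
  have hℓ0 : 0 ≤ ℓ := (norm_nonneg _).trans hQ
  obtain ⟨n, hen, hn, hℓn⟩ := ((frequently_forall_norm_pow_sub_one_lt he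
    (δ := η / (2 * (K + 1))) (by positivity)).and_eventually ((eventually_ne_atTop 0).and
    ((tendsto_pow_atTop_nhds_zero_of_lt_one hℓ0 hℓ).eventually
      (gt_mem_nhds (half_pos hη))))).exists
  have hsum : ∑ j, P j = L ^ n - (L * (1 - ∑ j, P j)) ^ n - ∑ j, (e j ^ n - 1) • P j := by
    rw [← sum_pow_smul_eq_pow_sub_pow hcomm hidem heig hn]
    simp [sub_smul]
  calc ‖∑ j, P j‖ ≤ ‖L ^ n‖ + ‖(L * (1 - ∑ j, P j)) ^ n‖ + ∑ j, ‖e j ^ n - 1‖ * ‖P j‖ := by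
        conv_lhs => rw [hsum]
        refine (norm_sub_le _ _).trans
          (add_le_add (norm_sub_le _ _) ((norm_sum_le _ _).trans ?_))
        simp only [norm_smul, le_refl]
    _ ≤ 1 + η / 2 + η / (2 * (K + 1)) * K := by
        rw [Finset.mul_sum]
        gcongr with j
        · exact (norm_pow_le' L (Nat.pos_of_ne_zero hn)).trans (pow_le_one₀ (norm_nonneg _) hL)
        · exact ((norm_pow_le' _ (Nat.pos_of_ne_zero hn)).trans
            (pow_le_pow_left₀ (norm_nonneg _) hQ n)).trans hℓn.le
        · exact (hen j).le
    _ ≤ 1 + η := by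
        have : η / (2 * (K + 1)) * K ≤ η / 2 := by
          rw [div_mul_eq_mul_div, div_le_div_iff₀ (by positivity) two_pos]; nlinarith
        linarith

end PeripheralProjection

section Splitting

variable {R : Type*} [Ring R] (L P : ℕ → R)

noncomputable def peripheralProd (k : ℕ) : R := opProd (fun i => L i * P i) k * P 0

noncomputable def contractingProd (k : ℕ) : R :=
  opProd (fun i => L i * (1 - P i)) k * (1 - P 0)

noncomputable def splittingError (k : ℕ) : R :=
  opProd L k - peripheralProd L P k - contractingProd L P k

@[simp]
theorem peripheralProd_zero : peripheralProd L P 0 = P 0 := one_mul _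

theorem peripheralProd_succ (k : ℕ) :
    peripheralProd L P (k + 1) = L (k + 1) * P (k + 1) * peripheralProd L P k :=
  mul_assoc _ _ _

@[simp]
theorem contractingProd_zero : contractingProd L P 0 = 1 - P 0 := one_mul _

theorem contractingProd_succ (k : ℕ) :
    contractingProd L P (k + 1) = L (k + 1) * (1 - P (k + 1)) * contractingProd L P k :=
  mul_assoc _ _ _

@[simp]
theorem splittingError_zero : splittingError L P 0 = 0 := by
  simp [splittingError]

variable {L P}

theorem proj_mul_peripheralProd (hP : ∀ i, IsIdempotentElem (P i))
    (hLP : ∀ i, Commute (L i) (P i)) (k : ℕ) :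
    P k * peripheralProd L P k = peripheralProd L P k := by
  cases k with
  | zero => simpa using (hP 0).eq
  | succ k =>
    rw [peripheralProd_succ, ← mul_assoc, ← mul_assoc, ← (hLP _).eq, mul_assoc (L _), (hP _).eq]

theorem proj_mul_contractingProd (hP : ∀ i, IsIdempotentElem (P i))
    (hLP : ∀ i, Commute (L i) (P i)) (k : ℕ) : P k * contractingProd L P k = 0 := by
  cases k with
  | zero => simpa using (hP 0).mul_one_sub_self
  | succ k =>
    rw [contractingProd_succ, ← mul_assoc, ← mul_assoc, ← (hLP _).eq, mul_assoc (L _),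
      (hP _).mul_one_sub_self, mul_zero, zero_mul]

theorem proj_mul_splittingError_succ (hP : ∀ i, IsIdempotentElem (P i))
    (hLP : ∀ i, Commute (L i) (P i)) (k : ℕ) :
    P (k + 1) * splittingError L P (k + 1) =
      L (k + 1) * (P k * splittingError L P k +
        (P (k + 1) - P k) * (splittingError L P k + contractingProd L P k)) := by
  have hC := proj_mul_contractingProd hP hLP k
  rw [splittingError, splittingError, opProd_succ, peripheralProd_succ, contractingProd_succ]
  set a := L (k + 1)
  set p := P (k + 1)
  calc p * (a * opProd L k - a * p * peripheralProd L P k - a * (1 - p) * contractingProd L P k)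
      = (p * a) * opProd L k - (p * a) * p * peripheralProd L P k -
          (p * a) * (1 - p) * contractingProd L P k := by noncomm_ring
    _ = a * (p * opProd L k - (p * p) * peripheralProd L P k -
          (p * (1 - p)) * contractingProd L P k) := by rw [← (hLP _).eq]; noncomm_ring
    _ = a * (p * opProd L k - p * peripheralProd L P k - P k * contractingProd L P k) := by
      rw [(hP _).eq, (hP _).mul_one_sub_self, hC, zero_mul]
    _ = _ := by noncomm_ring

theorem one_sub_proj_mul_splittingError_succ (hP : ∀ i, IsIdempotentElem (P i))
    (hLP : ∀ i, Commute (L i) (P i)) (k : ℕ) :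
    (1 - P (k + 1)) * splittingError L P (k + 1) =
      L (k + 1) * (1 - P (k + 1)) * ((1 - P k) * splittingError L P k +
        (P k - P (k + 1)) * (opProd L k - contractingProd L P k)) := by
  have hB := proj_mul_peripheralProd hP hLP k
  have hQ := (hP (k + 1)).one_sub
  have hQL : (1 - P (k + 1)) * L (k + 1) = L (k + 1) * (1 - P (k + 1)) :=
    ((Commute.one_right _).sub_right (hLP _)).eq.symm
  rw [splittingError, splittingError, opProd_succ, peripheralProd_succ, contractingProd_succ]
  set a := L (k + 1)
  set p := P (k + 1)
  calc (1 - p) * (a * opProd L k - a * p * peripheralProd L P k -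
        a * (1 - p) * contractingProd L P k)
      = ((1 - p) * a) * opProd L k - ((1 - p) * a) * p * peripheralProd L P k -
          ((1 - p) * a) * (1 - p) * contractingProd L P k := by noncomm_ring
    _ = a * (1 - p) * opProd L k - a * ((1 - p) * p) * peripheralProd L P k -
          a * ((1 - p) * (1 - p)) * contractingProd L P k := by rw [hQL]; noncomm_ring
    _ = a * (1 - p) * ((1 - p) * (opProd L k - contractingProd L P k) -
          (peripheralProd L P k - P k * peripheralProd L P k)) := by
      rw [(hP _).one_sub_mul_self, hQ.eq, hB, sub_self, sub_zero, ← mul_assoc _ (1 - p),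
        hQ.mul_mul_self]
      noncomm_ring
    _ = _ := by noncomm_ring

end Splitting

theorem le_div_one_sub_of_le_mul_add {a : ℕ → ℝ} {r b : ℝ} (hr : 0 ≤ r) (hr1 : r < 1)
    (h0 : a 0 ≤ b / (1 - r)) (h : ∀ n, a (n + 1) ≤ r * a n + b) (n : ℕ) :
    a n ≤ b / (1 - r) := by
  induction n with
  | zero => exact h0
  | succ n ih =>
    calc a (n + 1) ≤ r * a n + b := h n
      _ ≤ r * (b / (1 - r)) + b := by gcongr
      _ = b / (1 - r) := by field_simp [(sub_pos.2 hr1).ne']; ring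

theorem norm_le_norm_mul_add_norm_one_sub_mul {R : Type*} [NormedRing R] (p x : R) :
    ‖x‖ ≤ ‖p * x‖ + ‖(1 - p) * x‖ := by
  simpa [sub_mul] using norm_add_le (p * x) ((1 - p) * x)

section Estimates

variable {R : Type*} [NormedRing R]

/-- `L i`, `P i` stand for `L_{i,T}`, `P_{i,T}`, and `u` bounds the one-step drift of the
projector, of order `c^P / T`. -/
structure AdiabaticSplitting (L P : ℕ → R) (ℓ u : ℝ) : Prop where
  norm_le_one : ∀ i, ‖L i‖ ≤ 1
  isIdempotentElem : ∀ i, IsIdempotentElem (P i)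
  commute : ∀ i, Commute (L i) (P i)
  norm_proj_le_one : ∀ i, ‖P i‖ ≤ 1
  norm_mul_one_sub_le : ∀ i, ‖L i * (1 - P i)‖ ≤ ℓ
  norm_proj_succ_sub_le : ∀ i, ‖P (i + 1) - P i‖ ≤ u

namespace AdiabaticSplitting

variable {L P : ℕ → R} {ℓ u : ℝ}

theorem rate_nonneg (h : AdiabaticSplitting L P ℓ u) : 0 ≤ ℓ :=
  (norm_nonneg _).trans (h.norm_mul_one_sub_le 0)

theorem drift_nonneg (h : AdiabaticSplitting L P ℓ u) : 0 ≤ u :=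
  (norm_nonneg _).trans (h.norm_proj_succ_sub_le 0)

variable [NormOneClass R]

theorem norm_opProd_le_one (h : AdiabaticSplitting L P ℓ u) (k : ℕ) : ‖opProd L k‖ ≤ 1 := by
  simpa using le_geom (u := fun m => ‖opProd L m‖) zero_le_one k fun m _ => by
    rw [opProd_succ, one_mul]
    exact (norm_mul_le _ _).trans (mul_le_of_le_one_left (norm_nonneg _) (h.norm_le_one _))

theorem norm_contractingProd_le (h : AdiabaticSplitting L P ℓ u) (k : ℕ) :
    ‖contractingProd L P k‖ ≤ 2 * ℓ ^ k := by
  have h0 : ‖contractingProd L P 0‖ ≤ 2 := by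
    rw [contractingProd_zero, ← one_add_one_eq_two, ← norm_one (α := R)]
    exact (norm_sub_le _ _).trans (by simpa using h.norm_proj_le_one 0)
  calc ‖contractingProd L P k‖ ≤ ℓ ^ k * ‖contractingProd L P 0‖ :=
        le_geom (u := fun m => ‖contractingProd L P m‖) h.rate_nonneg k fun m _ => by
          rw [contractingProd_succ]
          exact (norm_mul_le _ _).trans (by gcongr; exact h.norm_mul_one_sub_le _)
    _ ≤ 2 * ℓ ^ k := by
        rw [mul_comm]; exact mul_le_mul_of_nonneg_right h0 (pow_nonneg h.rate_nonneg k)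

theorem norm_one_sub_proj_mul_splittingError_le (h : AdiabaticSplitting L P ℓ u) (hℓ : ℓ < 1)
    (k : ℕ) : ‖(1 - P k) * splittingError L P k‖ ≤ 3 * u / (1 - ℓ) := by
  refine le_div_one_sub_of_le_mul_add (a := fun m => ‖(1 - P m) * splittingError L P m‖)
    h.rate_nonneg hℓ ?_ (fun m => ?_) k
  · simpa using div_nonneg (mul_nonneg zero_le_three h.drift_nonneg) (sub_pos.2 hℓ).le
  have hAC : ‖opProd L m - contractingProd L P m‖ ≤ 3 := by
    have := pow_le_one₀ h.rate_nonneg hℓ.le (n := m)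
    linarith [norm_sub_le (opProd L m) (contractingProd L P m), h.norm_opProd_le_one m,
      h.norm_contractingProd_le m]
  rw [one_sub_proj_mul_splittingError_succ h.isIdempotentElem h.commute]
  calc _ ≤ ‖L (m + 1) * (1 - P (m + 1))‖ * (‖(1 - P m) * splittingError L P m‖ +
          ‖P m - P (m + 1)‖ * ‖opProd L m - contractingProd L P m‖) := by
        refine (norm_mul_le _ _).trans ?_
        gcongr
        exact (norm_add_le _ _).trans (by gcongr; exact norm_mul_le _ _)
    _ ≤ ℓ * (‖(1 - P m) * splittingError L P m‖ + u * 3) := by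
        gcongr
        · exact h.rate_nonneg
        · exact h.norm_mul_one_sub_le _
        · exact h.drift_nonneg
        · rw [norm_sub_rev]; exact h.norm_proj_succ_sub_le m
    _ ≤ ℓ * ‖(1 - P m) * splittingError L P m‖ + 3 * u := by
        nlinarith [h.rate_nonneg, h.drift_nonneg]

theorem norm_proj_mul_splittingError_succ_le (h : AdiabaticSplitting L P ℓ u) (hℓ : ℓ < 1)
    (m : ℕ) :
    ‖P (m + 1) * splittingError L P (m + 1)‖ ≤
      (1 + u) * ‖P m * splittingError L P m‖ + u * (3 * u / (1 - ℓ) + 2 * ℓ ^ m) := by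
  have hE := norm_le_norm_mul_add_norm_one_sub_mul (P m) (splittingError L P m)
  have hG := h.norm_one_sub_proj_mul_splittingError_le hℓ m
  have hC := h.norm_contractingProd_le m
  have hu := h.drift_nonneg
  rw [proj_mul_splittingError_succ h.isIdempotentElem h.commute]
  calc _ ≤ 1 * (‖P m * splittingError L P m‖ + ‖P (m + 1) - P m‖ *
          (‖splittingError L P m‖ + ‖contractingProd L P m‖)) := by
        refine (norm_mul_le _ _).trans ?_
        gcongr
        · exact h.norm_le_one _
        · refine (norm_add_le _ _).trans (add_le_add le_rfl ((norm_mul_le _ _).trans ?_))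
          gcongr
          exact norm_add_le _ _
    _ ≤ 1 * (‖P m * splittingError L P m‖ + u *
          (‖P m * splittingError L P m‖ + 3 * u / (1 - ℓ) + 2 * ℓ ^ m)) := by
        gcongr
        · exact h.norm_proj_succ_sub_le m
        · linarith
    _ = _ := by ring

theorem norm_proj_mul_splittingError_le (h : AdiabaticSplitting L P ℓ u) (hℓ : ℓ < 1)
    (k : ℕ) :
    ‖P k * splittingError L P k‖ ≤ (3 * k * u + 2) * u / (1 - ℓ) * Real.exp (k * u) := by
  have hℓ' : 0 < 1 - ℓ := sub_pos.2 hℓ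
  have hu := h.drift_nonneg
  have hℓ0 := h.rate_nonneg
  have key := discrete_gronwall (u := fun m => ‖P m * splittingError L P m‖) (c := fun _ => u)
    (b := fun m => u * (3 * u / (1 - ℓ) + 2 * ℓ ^ m)) (n₀ := 0) (by positivity)
    (fun m _ => h.norm_proj_mul_splittingError_succ_le hℓ m) (fun _ _ => hu)
    (fun _ _ => by positivity) (Nat.zero_le k)
  simp only [splittingError_zero, mul_zero, norm_zero, zero_add, Finset.sum_const,
    Nat.card_Ico, tsub_zero, nsmul_eq_mul] at key
  refine key.trans ?_
  gcongr
  have hgeom := geom_sum_Ico_le_of_lt_one (m := 0) (n := k) hℓ0 hℓ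
  rw [pow_zero] at hgeom
  rw [← Finset.mul_sum, Finset.sum_add_distrib, ← Finset.mul_sum, Finset.sum_const,
    Nat.card_Ico, tsub_zero, nsmul_eq_mul]
  calc u * (k * (3 * u / (1 - ℓ)) + 2 * ∑ i ∈ Finset.Ico 0 k, ℓ ^ i)
      ≤ u * (k * (3 * u / (1 - ℓ)) + 2 * (1 / (1 - ℓ))) := by gcongr
    _ = (3 * k * u + 2) * u / (1 - ℓ) := by field_simp

theorem norm_splittingError_le (h : AdiabaticSplitting L P ℓ u) (hℓ : ℓ < 1) {k : ℕ} {c : ℝ}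
    (hk : k * u ≤ c) :
    ‖splittingError L P k‖ ≤ ((3 * c + 2) * Real.exp c + 3) * u / (1 - ℓ) := by
  have := norm_le_norm_mul_add_norm_one_sub_mul (P k) (splittingError L P k)
  have := h.norm_proj_mul_splittingError_le hℓ k
  have := h.norm_one_sub_proj_mul_splittingError_le hℓ k
  have hu := h.drift_nonneg
  have hℓ' : 0 < 1 - ℓ := sub_pos.2 hℓ
  calc _ ≤ ((3 * (k * u) + 2) * Real.exp (k * u) + 3) * u / (1 - ℓ) := by
        linarith [show (3 * k * u + 2) * u / (1 - ℓ) * Real.exp (k * u) + 3 * u / (1 - ℓ) =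
          ((3 * (k * u) + 2) * Real.exp (k * u) + 3) * u / (1 - ℓ) by ring]
    _ ≤ _ := by gcongr; linarith [mul_nonneg (Nat.cast_nonneg k) hu]

end AdiabaticSplitting

end Estimates

theorem norm_sum_sub_sum_le_of_norm_derivWithin_le {E : Type*} [NormedAddCommGroup E]
    [NormedSpace ℝ E] {J : Type*} [Fintype J] {f : J → ℝ → E} {S : Set ℝ} (hS : Convex ℝ S)
    {C : ℝ} (hf : ∀ j, DifferentiableOn ℝ (f j) S)
    (hC : ∀ j, ∀ t ∈ S, ‖derivWithin (f j) S t‖ ≤ C) {x y : ℝ} (hx : x ∈ S) (hy : y ∈ S) :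
    ‖∑ j, f j y - ∑ j, f j x‖ ≤ Fintype.card J * C * |y - x| := by
  rw [← Finset.sum_sub_distrib]
  refine (norm_sum_le _ _).trans ?_
  simpa [mul_assoc] using Finset.sum_le_sum fun j (_ : j ∈ Finset.univ) =>
    hS.norm_image_sub_le_of_norm_derivWithin_le (hf j) (hC j) hx hy

theorem adiabaticSplitting_of_peripheral {R : Type*} [NormedRing R] [NormedAlgebra ℂ R]
    {J : Type*} [Fintype J] {S : Set ℝ} (hS : Convex ℝ S) {L : ℝ → R} {e : J → ℝ → ℂ}
    {P : J → ℝ → R} {ℓ c : ℝ} (hL : ∀ t ∈ S, ‖L t‖ ≤ 1) (he : ∀ j, ∀ t ∈ S, ‖e j t‖ = 1)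
    (hP : ∀ t ∈ S, OrthogonalIdempotents (P · t))
    (hLP : ∀ j, ∀ t ∈ S, Commute (L t) (P j t))
    (heig : ∀ j, ∀ t ∈ S, L t * P j t = e j t • P j t) (hℓ : ℓ < 1)
    (hQ : ∀ t ∈ S, ‖L t * (1 - ∑ j, P j t)‖ ≤ ℓ) (hdiff : ∀ j, DifferentiableOn ℝ (P j) S)
    (hderiv : ∀ j, ∀ t ∈ S, ‖derivWithin (P j) S t‖ ≤ c) {s : ℕ → ℝ} (hs : ∀ i, s i ∈ S)
    {δ : ℝ} (hδ : ∀ i, |s (i + 1) - s i| ≤ δ) :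
    AdiabaticSplitting (fun i => L (s i)) (fun i => ∑ j, P j (s i)) ℓ
      (Fintype.card J * c * δ) where
  norm_le_one i := hL _ (hs i)
  isIdempotentElem i := (hP _ (hs i)).isIdempotentElem_sum
  commute i := Commute.sum_right _ _ _ fun j _ => hLP j _ (hs i)
  norm_proj_le_one i := norm_sum_le_one_of_peripheral (hL _ (hs i)) (fun j => he j _ (hs i))
    (Commute.sum_right _ _ _ fun j _ => hLP j _ (hs i)) (hP _ (hs i)).isIdempotentElem_sum
    (fun j => heig j _ (hs i)) hℓ (hQ _ (hs i))
  norm_mul_one_sub_le i := hQ _ (hs i)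
  norm_proj_succ_sub_le i := by
    have hc : 0 ≤ (Fintype.card J : ℝ) * c := by
      simpa using Finset.sum_nonneg fun j (_ : j ∈ Finset.univ) =>
        (norm_nonneg _).trans (hderiv j _ (hs 0))
    exact (norm_sum_sub_sum_le_of_norm_derivWithin_le hS hdiff hderiv (hs i) (hs (i + 1))).trans
      (mul_le_mul_of_nonneg_left (hδ i) hc)

theorem abs_min_succ_div_sub_min_div_le {T : ℝ} (hT : 0 < T) (i : ℕ) :
    |min (((i + 1 : ℕ) : ℝ) / T) 1 - min ((i : ℝ) / T) 1| ≤ 1 / T := by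
  refine (abs_min_sub_min_le_max _ _ _ _).trans ?_
  rw [sub_self, abs_zero, Nat.cast_succ, ← sub_div, add_sub_cancel_left,
    abs_of_pos (by positivity)]
  exact max_le le_rfl (by positivity)

theorem contracting_part_elimination_general
    {X : Type*} [NormedAddCommGroup X] [NormedSpace ℂ X]
    [Nontrivial X]
    (L : ℝ → (X →L[ℂ] X))
    {J : Type*} [Fintype J]
    (e : J → ℝ → ℂ) (P : J → ℝ → (X →L[ℂ] X)) (ℓ cP : ℝ)
    -- H1
    (hH1 : ∀ s ∈ Set.Icc (0:ℝ) 1, ‖L s‖ ≤ 1)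
    -- H2
    (he_unit : ∀ j, ∀ s ∈ Set.Icc (0:ℝ) 1, ‖e j s‖ = 1)
    (hP_idem : ∀ j, ∀ s ∈ Set.Icc (0:ℝ) 1, P j s * P j s = P j s)
    (hP_comm : ∀ j, ∀ s ∈ Set.Icc (0:ℝ) 1, L s * P j s = P j s * L s)
    (hP_eig : ∀ j, ∀ s ∈ Set.Icc (0:ℝ) 1, L s * P j s = e j s • P j s)
    (hP_disj : ∀ i j, i ≠ j → ∀ s ∈ Set.Icc (0:ℝ) 1, P i s * P j s = 0)
    -- H4
    (hℓ : ℓ < 1)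
    (hH4 : ∀ s ∈ Set.Icc (0:ℝ) 1, ‖L s * (1 - ∑ j, P j s)‖ ≤ ℓ)
    -- the peripheral data is C², with derivatives bounded by `c^P`
    (hPC2 : ∀ j, ContDiffOn ℝ 2 (fun s => P j s) (Set.Icc (0:ℝ) 1))
    (hcP : ∀ j, ∀ s ∈ Set.Icc (0:ℝ) 1, ∀ α ∈ ({1, 2} : Set ℕ),
      ‖iteratedDerivWithin α (fun s => P j s) (Set.Icc (0:ℝ) 1) s‖ ≤ cP ∧
      ‖iteratedDerivWithin α (e j) (Set.Icc (0:ℝ) 1) s‖ ≤ cP) :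
    ∃ CP : ℝ, 0 < CP ∧
      ∀ T : ℕ, 1 ≤ T → ∀ k : ℕ, k ≤ T →
        ‖opProd (fun i => L ((i : ℝ) / (T : ℝ))) k -
            opProd (fun i => L ((i : ℝ) / (T : ℝ)) * ∑ j, P j ((i : ℝ) / (T : ℝ))) k *
              (∑ j, P j 0) -
            opProd (fun i => L ((i : ℝ) / (T : ℝ)) * (1 - ∑ j, P j ((i : ℝ) / (T : ℝ)))) k *
              (1 - ∑ j, P j 0)‖ ≤ CP / ((T : ℝ) * (1 - ℓ)) ∧
        ‖opProd (fun i => L ((i : ℝ) / (T : ℝ)) * (1 - ∑ j, P j ((i : ℝ) / (T : ℝ)))) k *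
            (1 - ∑ j, P j 0)‖ ≤ 2 * ℓ ^ k := by
  set c := Fintype.card J * cP
  refine ⟨max (((3 * c + 2) * Real.exp c + 3) * c) 1, lt_max_of_lt_right one_pos,
    fun T hT k hk => ?_⟩
  have hT0 : (0 : ℝ) < T := by exact_mod_cast hT
  -- clamped to `[0, 1]` so that the hypotheses apply at every index; for `i ≤ k` nothing changes
  set s : ℕ → ℝ := fun i => min ((i : ℝ) / T) 1
  have h := adiabaticSplitting_of_peripheral (convex_Icc 0 1) hH1 he_unit
    (fun t ht => ⟨fun j => hP_idem j t ht, fun i j hij => hP_disj i j hij t ht⟩) hP_comm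
    hP_eig hℓ hH4 (fun j => (hPC2 j).differentiableOn two_ne_zero)
    (fun j t ht => by simpa using (hcP j t ht 1 (by simp)).1) (s := s)
    (fun i => ⟨le_min (by positivity) zero_le_one, min_le_right _ _⟩)
    (abs_min_succ_div_sub_min_div_le hT0)
  have hprod (F : ℝ → X →L[ℂ] X) : opProd (fun i => F (s i)) k = opProd (fun i => F (i / T)) k :=
    opProd_congr fun i _ hi => by
      rw [show s i = i / T from min_eq_left ((div_le_one hT0).2 (by exact_mod_cast hi.trans hk))]
  have hs0 : s 0 = 0 := by simp [s]
  have hu : 0 ≤ c * (1 / T) := h.drift_nonneg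
  have hE := h.norm_splittingError_le hℓ (k := k) (c := c) <| calc
    k * (c * (1 / T)) ≤ T * (c * (1 / T)) := by gcongr
    _ = c := by field_simp
  have hC := h.norm_contractingProd_le k
  simp only [splittingError, peripheralProd, contractingProd, hs0] at hC hE
  rw [hprod L, hprod (fun t => L t * ∑ j, P j t), hprod (fun t => L t * (1 - ∑ j, P j t))] at hE
  rw [hprod (fun t => L t * (1 - ∑ j, P j t))] at hC
  refine ⟨hE.trans ?_, hC⟩
  have hℓ' : 0 < 1 - ℓ := sub_pos.2 hℓ
  calc ((3 * c + 2) * Real.exp c + 3) * (c * (1 / T)) / (1 - ℓ)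
      = ((3 * c + 2) * Real.exp c + 3) * c / (T * (1 - ℓ)) := by field_simp
    _ ≤ _ := by gcongr; exact le_max_left _ _

/-- **Elimination of the strictly contracting part** (Proposition 4.6): under H1–H4 there
is a constant `C^P` (depending only on `c^P`) such that for any `T ≥ 1` and `k ≤ T`,
`‖L_{k,T} ⋯ L_{1,T} - L^P_{k,T} ⋯ L^P_{1,T} P₀ - L^Q_{k,T} ⋯ L^Q_{1,T} Q₀‖ ≤ C^P/(T(1-ℓ))`,
and `‖L^Q_{k,T} ⋯ L^Q_{1,T} Q₀‖ ≤ 2 ℓ^k`. -/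
theorem contracting_part_elimination
    {X : Type*} [NormedAddCommGroup X] [NormedSpace ℂ X] [FiniteDimensional ℂ X]
    [Nontrivial X]
    (L : ℝ → (X →L[ℂ] X))
    {J : Type*} [Fintype J] [Nonempty J]
    (e : J → ℝ → ℂ) (P : J → ℝ → (X →L[ℂ] X)) (ε ℓ cP : ℝ)
    -- H1
    (hH1 : ∀ s ∈ Set.Icc (0:ℝ) 1, ‖L s‖ ≤ 1)
    -- H2
    (hε : 0 < ε)
    (he_unit : ∀ j, ∀ s ∈ Set.Icc (0:ℝ) 1, ‖e j s‖ = 1)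
    (hgap : ∀ s ∈ Set.Icc (0:ℝ) 1, ∀ i j, i ≠ j → 2 * ε < ‖e i s - e j s‖)
    (hP_idem : ∀ j, ∀ s ∈ Set.Icc (0:ℝ) 1, P j s * P j s = P j s)
    (hP_comm : ∀ j, ∀ s ∈ Set.Icc (0:ℝ) 1, L s * P j s = P j s * L s)
    (hP_eig : ∀ j, ∀ s ∈ Set.Icc (0:ℝ) 1, L s * P j s = e j s • P j s)
    (hP_disj : ∀ i j, i ≠ j → ∀ s ∈ Set.Icc (0:ℝ) 1, P i s * P j s = 0)
    (hP_rank : ∀ j, ∀ s ∈ Set.Icc (0:ℝ) 1,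
      Module.finrank ℂ (LinearMap.range ((P j s : X →ₗ[ℂ] X))) = 1)
    -- H3
    (hH3 : ContDiffOn ℝ 2 (fun s => L s * ∑ j, P j s) (Set.Icc (0:ℝ) 1))
    -- H4
    (hℓ : ℓ < 1)
    (hH4 : ∀ s ∈ Set.Icc (0:ℝ) 1, ‖L s * (1 - ∑ j, P j s)‖ ≤ ℓ)
    -- the peripheral data is C², with derivatives bounded by `c^P`
    (heC2 : ∀ j, ContDiffOn ℝ 2 (e j) (Set.Icc (0:ℝ) 1))
    (hPC2 : ∀ j, ContDiffOn ℝ 2 (fun s => P j s) (Set.Icc (0:ℝ) 1))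
    (hcP : ∀ j, ∀ s ∈ Set.Icc (0:ℝ) 1, ∀ α ∈ ({1, 2} : Set ℕ),
      ‖iteratedDerivWithin α (fun s => P j s) (Set.Icc (0:ℝ) 1) s‖ ≤ cP ∧
      ‖iteratedDerivWithin α (e j) (Set.Icc (0:ℝ) 1) s‖ ≤ cP) :
    ∃ CP : ℝ, 0 < CP ∧
      ∀ T : ℕ, 1 ≤ T → ∀ k : ℕ, k ≤ T →
        ‖opProd (fun i => L ((i : ℝ) / (T : ℝ))) k -
            opProd (fun i => L ((i : ℝ) / (T : ℝ)) * ∑ j, P j ((i : ℝ) / (T : ℝ))) k *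
              (∑ j, P j 0) -
            opProd (fun i => L ((i : ℝ) / (T : ℝ)) * (1 - ∑ j, P j ((i : ℝ) / (T : ℝ)))) k *
              (1 - ∑ j, P j 0)‖ ≤ CP / ((T : ℝ) * (1 - ℓ)) ∧
        ‖opProd (fun i => L ((i : ℝ) / (T : ℝ)) * (1 - ∑ j, P j ((i : ℝ) / (T : ℝ)))) k *
            (1 - ∑ j, P j 0)‖ ≤ 2 * ℓ ^ k :=
  contracting_part_elimination_general L e P ℓ cP hH1 he_unit hP_idem hP_comm hP_eig hP_disj hℓ hH4
    hPC2 hcP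

end RISPaper
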